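/- Let α ∈ (0,1] and suppose that for a sequence of iterations i = 1,...,T we have positive reals r_i (remaining elements), f_i (makespan of iteration i), x_i (elements newly covered), with x_i > 0, Σ_i x_i = r_1, r_{i+1} = r_i - x_i, and define h_i = (f_i · r_i)/((2/α)·x_i). If g: ℝ≥0 → ℝ≥0 is the nondecreasing step function of an optimal schedule such that for each i the number of elements covered by time ⌊h_i⌋ among the r_i remaining is at most r_i/2 (so g's coverage curve has height ≥ h_i at position r_i/2 from the right), then Σ_i f_i·r_i ≤ (4/α)·(area under g) = (4/α)·OPT. -/

import Mathlib

/-!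
Put `c i = r 0 - r i / 2`. The columns `[c i, c (i + 1)]` have width `x i / 2` and tile
`[r 0 / 2, r 0]`, and by the hypothesis on `g` the column of height `f i · r i / ((2 / α) · x i)`
over `[c i, c (i + 1)]` lies under the monotone curve `g`. Its area is `(α / 4) · f i · r i`, so
summing the columns bounds `Σ f i · r i` by `4 / α` times the area under `g` on `[r 0 / 2, r 0]`.
-/

open Finset intervalIntegral

theorem eq_sub_sum_range_of_succ_eq_sub {M : Type*} [AddCommGroup M] {r x : ℕ → M} {T : ℕ}
    (h : ∀ i < T, r (i + 1) = r i - x i) : r T = r 0 - ∑ i ∈ range T, x i := by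
  induction T with
  | zero => simp
  | succ n ih =>
    rw [h n (Nat.lt_succ_self n), ih fun i hi => h i (hi.trans (Nat.lt_succ_self n)),
      sum_range_succ, sub_add_eq_sub_sub]

theorem Monotone.sum_mul_le_intervalIntegral {g : ℝ → ℝ} (hg : Monotone g) {c : ℕ → ℝ}
    {T : ℕ} (hc : ∀ i < T, c i ≤ c (i + 1)) :
    ∑ i ∈ range T, (c (i + 1) - c i) * g (c i) ≤ ∫ t in c 0..c T, g t := by
  have hint (a b : ℝ) : IntervalIntegrable g MeasureTheory.volume a b := hg.intervalIntegrable
  rw [← sum_integral_adjacent_intervals fun _ _ => hint _ _]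
  refine sum_le_sum fun i hi => ?_
  simpa only [integral_const, smul_eq_mul] using
    integral_mono_on (hc i (mem_range.1 hi)) intervalIntegrable_const (hint _ _) fun t ht => hg ht.1

theorem histogram_shrinkage_general (α : ℝ) (hα : α ∈ Set.Ioc (0 : ℝ) 1) (T : ℕ)
    (r f x : ℕ → ℝ)
    (hx : ∀ i < T, 0 < x i)
    (hrec : ∀ i < T, r (i + 1) = r i - x i)
    (hsum : ∑ i ∈ Finset.range T, x i = r 0)
    (g : ℝ → ℝ) (hg : Monotone g) (hg0 : ∀ t, 0 ≤ g t)
    (hcut : ∀ i < T, f i * r i / ((2 / α) * x i) ≤ g (r 0 - r i / 2)) :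
    ∑ i ∈ Finset.range T, f i * r i ≤ (4 / α) * ∫ t in (0 : ℝ)..(r 0), g t := by
  obtain ⟨hα0, -⟩ := hα
  set c : ℕ → ℝ := fun i => r 0 - r i / 2 with hc
  have hstep : ∀ i < T, c (i + 1) - c i = x i / 2 := fun i hi => by
    simp only [hc, hrec i hi]; ring
  have hrT : r T = 0 := by rw [eq_sub_sum_range_of_succ_eq_sub hrec, hsum, sub_self]
  have hr0 : 0 ≤ r 0 := hsum ▸ sum_nonneg fun i hi => (hx i (mem_range.1 hi)).le
  have hcolumn : ∀ i < T, f i * r i ≤ 4 / α * ((c (i + 1) - c i) * g (c i)) := fun i hi => by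
    have hwidth : 0 < 2 / α * x i := by have := hx i hi; positivity
    rw [hstep i hi]
    calc f i * r i ≤ g (c i) * (2 / α * x i) := (div_le_iff₀ hwidth).1 (hcut i hi)
      _ = 4 / α * (x i / 2 * g (c i)) := by ring
  calc ∑ i ∈ range T, f i * r i
      ≤ 4 / α * ∑ i ∈ range T, (c (i + 1) - c i) * g (c i) := by
        rw [mul_sum]; exact sum_le_sum fun i hi => hcolumn i (mem_range.1 hi)
    _ ≤ 4 / α * ∫ t in c 0..c T, g t := by
        gcongr
        exact hg.sum_mul_le_intervalIntegral fun i hi => by linarith [hstep i hi, hx i hi]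
    _ ≤ 4 / α * ∫ t in (0 : ℝ)..r 0, g t := by
        gcongr
        refine integral_mono_interval ?_ ?_ ?_ (.of_forall hg0) hg.intervalIntegrable <;>
          simp only [hc, hrT] <;> linarith

/-- Abstract histogram-shrinkage argument: with `r i` remaining elements, makespans
`f i` and newly covered counts `x i` at each greedy iteration, and `g` the
nondecreasing coverage curve of an optimal schedule satisfying
`g(r 0 - r i / 2) ≥ h i` where `h i = f i · r i / ((2/α)·x i)`, the greedy cost
`Σ f i · r i` is at most `(4/α)` times the area under `g`. -/
theorem histogram_shrinkage (α : ℝ) (hα : α ∈ Set.Ioc (0 : ℝ) 1) (T : ℕ)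
    (r f x : ℕ → ℝ)
    (hr : ∀ i < T, 0 < r i) (hfpos : ∀ i < T, 0 < f i) (hx : ∀ i < T, 0 < x i)
    (hrec : ∀ i < T, r (i + 1) = r i - x i)
    (hsum : ∑ i ∈ Finset.range T, x i = r 0)
    (g : ℝ → ℝ) (hg : Monotone g) (hg0 : ∀ t, 0 ≤ g t)
    (hcut : ∀ i < T, f i * r i / ((2 / α) * x i) ≤ g (r 0 - r i / 2)) :
    ∑ i ∈ Finset.range T, f i * r i ≤ (4 / α) * ∫ t in (0 : ℝ)..(r 0), g t :=
  histogram_shrinkage_general α hα T r f x hx hrec hsum g hg hg0 hcut
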